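/- For all real (β, α) with −α < β ≤ 0 and 0 < α < 1/3 (the region V₂): λ_{α,β}(3, −2, 0, 2/3) < λ_{α,β}(1, 0, 0, 0) = −β/3, both denominators c₂^β − (α²/2)·r being nonzero on this region. (This is the comparison λ_{α,β}(Q) < λ_{α,β}(O) on V₂.) -/

import Mathlib

/-
After the twist by `β`, the slope of a line bundle is `λ_{α,β}(O(k)) = (k - β)/3`, and a direct
computation gives `λ_{α,β}(Q) = -β/3 + (2 + α² - β²)/(3D)`, where
`D = 2β + (3/2)(β² - α²)` is the denominator of `λ_{α,β}(Q)`. On `V₂` we have `β² < α²` and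
`β ≤ 0`, so `D < 0` while `2 + α² - β² > 0`.
-/

/-- Second-tilt slope `λ_{α,β}` of a Chern vector `(r, c₁, c₂, c₃)` on `P³`
(`H³ = 1`). -/
noncomputable def tiltLambda (α β r c₁ c₂ c₃ : ℝ) : ℝ :=
  ((c₃ - β * c₂ + (β ^ 2 / 2) * c₁ - (β ^ 3 / 6) * r)
      - (α ^ 2 / 6) * (c₁ - β * r)) /
    (c₂ - β * c₁ + (β ^ 2 / 2) * r - (α ^ 2 / 2) * r)

theorem tiltLambda_lineBundle (α β k : ℝ) (h : (k - β) ^ 2 ≠ α ^ 2) :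
    tiltLambda α β 1 k (k ^ 2 / 2) (k ^ 3 / 6) = (k - β) / 3 := by
  have hden : k ^ 2 / 2 - β * k + β ^ 2 / 2 * 1 - α ^ 2 / 2 * 1 = ((k - β) ^ 2 - α ^ 2) / 2 := by
    ring
  have hne : (k - β) ^ 2 - α ^ 2 ≠ 0 := sub_ne_zero.mpr h
  unfold tiltLambda
  rw [hden, div_eq_iff (by positivity)]
  ring

theorem tiltLambda_Q (α β : ℝ) (hD : 2 * β + (3/2) * β ^ 2 - (3/2) * α ^ 2 ≠ 0) :
    tiltLambda α β 3 (-2) 0 (2/3) =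
      -β / 3 + (2 + α ^ 2 - β ^ 2) / (3 * (2 * β + (3/2) * β ^ 2 - (3/2) * α ^ 2)) := by
  have hden : 0 - β * (-2) + β ^ 2 / 2 * 3 - α ^ 2 / 2 * 3 =
      2 * β + (3/2) * β ^ 2 - (3/2) * α ^ 2 := by
    ring
  unfold tiltLambda
  rw [hden, div_add_div _ _ three_ne_zero (mul_ne_zero three_ne_zero hD),
    div_eq_div_iff hD (mul_ne_zero three_ne_zero (mul_ne_zero three_ne_zero hD))]
  ring

theorem lambda_Q_lt_lambda_O_on_V2_general (α β : ℝ) (h1 : -α < β) (h2 : β ≤ 0) :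
    (β ^ 2 / 2 - α ^ 2 / 2 ≠ 0) ∧
    (2 * β + (3/2) * β ^ 2 - (3/2) * α ^ 2 ≠ 0) ∧
    tiltLambda α β 1 0 0 0 = -β / 3 ∧
    tiltLambda α β 3 (-2) 0 (2/3) < tiltLambda α β 1 0 0 0 := by
  have hsq : β ^ 2 < α ^ 2 := sq_lt_sq' h1 (by linarith)
  have hD : 2 * β + (3/2) * β ^ 2 - (3/2) * α ^ 2 < 0 := by linarith
  have hO : tiltLambda α β 1 0 0 0 = -β / 3 := by
    simpa using tiltLambda_lineBundle α β 0 (by simpa using hsq.ne)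
  refine ⟨(by linarith : β ^ 2 / 2 - α ^ 2 / 2 < 0).ne, hD.ne, hO, ?_⟩
  have hgap : (2 + α ^ 2 - β ^ 2) / (3 * (2 * β + (3/2) * β ^ 2 - (3/2) * α ^ 2)) < 0 :=
    div_neg_of_pos_of_neg (by linarith) (by linarith)
  rw [hO, tiltLambda_Q α β hD.ne]
  linarith

/-- On the region `V₂ = {(β, α) : −α < β ≤ 0, 0 < α < 1/3}`:
`λ_{α,β}(Q) < λ_{α,β}(O) = −β/3`, with `ch(Q) = (3, −2, 0, 2/3)` and
`ch(O) = (1, 0, 0, 0)`, both denominators `c₂^β − (α²/2) r` being nonzero on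
this region. -/
theorem lambda_Q_lt_lambda_O_on_V2 (α β : ℝ) (h1 : -α < β) (h2 : β ≤ 0)
    (h3 : 0 < α) (h4 : α < 1/3) :
    (β ^ 2 / 2 - α ^ 2 / 2 ≠ 0) ∧
    (2 * β + (3/2) * β ^ 2 - (3/2) * α ^ 2 ≠ 0) ∧
    tiltLambda α β 1 0 0 0 = -β / 3 ∧
    tiltLambda α β 3 (-2) 0 (2/3) < tiltLambda α β 1 0 0 0 :=
  lambda_Q_lt_lambda_O_on_V2_general α β h1 h2
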